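/- Let r_i=2^{-2^i} and a_i=2^{2^{i+1}}/(i(i+1)), and let f be the Kneser function of order 2 with f'(x)=2a_i x on (r_{i+1},r_i). Then with h(r)=log 2/ log|log r|, one has lim_{r→0} f(r)/h(r)=1, while liminf_{r→0} f'(r)/h'(r) = 0 and limsup_{r→0} f'(r)/h'(r) = ∞. -/

import Mathlib

open Filter Set Topology

/-- `r_i = 2^{-2^i}`. -/
noncomputable def rseq (i : ℕ) : ℝ := ((2 : ℝ) ^ (2 ^ i : ℕ))⁻¹

/-- `a_i = 2^{2^{i+1}} / (i(i+1))`. -/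
noncomputable def aseq (i : ℕ) : ℝ := (2 : ℝ) ^ (2 ^ (i + 1) : ℕ) / ((i : ℝ) * ((i : ℝ) + 1))

/-- The gauge function `h(r) = log 2 / log |log r|`. -/
noncomputable def gaugeH (r : ℝ) : ℝ := Real.log 2 / Real.log |Real.log r|

/-!
On `(r_{i+1}, r_i]` one has `f x = T_i + a_i (x² - r_i²)`, where the tail
`T_i = ∑_{j ≥ i} a_j (r_j² - r_{j+1}²) = ∑_{j ≥ i} (1 - r_j²) / (j (j + 1))` satisfies
`(1 - r_i²) / i ≤ T_i ≤ 1 / i`. So `f x` lies between `(1 - x²) / (i + 1)` and `1 / i`, while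
`-log x ∈ [2^i log 2, 2^(i+1) log 2)` puts `log (-log x)` between `(i - 1) log 2` and
`(i + 1) log 2`; together, `|f / h - 1| ≤ 2 h + x²`, which tends to `0`.

Inside the interval `f' / h' = 2 a_i x² (-log x) (log (-log x))² / log 2`. At `x = r_i / 2`
this is at least `2^i / 32`; at `x = 2 r_{i+1} = 2 r_i²` the factor
`a_i x² = 4 r_i² / (i (i + 1))` is doubly exponentially small and the ratio is at most
`32 · 2^(-i)`. Near `0` the ratio is nonnegative, also at the corners `r_i` where `deriv f` is a
junk value, because `f` is increasing.
-/

open Real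

lemma rseq_pos (i : ℕ) : 0 < rseq i := by
  unfold rseq; positivity

lemma rseq_succ (i : ℕ) : rseq (i + 1) = rseq i ^ 2 := by
  rw [rseq, rseq, inv_pow, ← pow_mul, pow_succ]

lemma rseq_le_inv_two_pow (i : ℕ) : rseq i ≤ 2⁻¹ ^ i := by
  rw [rseq, inv_pow]
  exact inv_anti₀ (by positivity) (pow_le_pow_right₀ one_le_two Nat.lt_two_pow_self.le)

lemma rseq_lt_one (i : ℕ) : rseq i < 1 := by
  rw [rseq]
  exact inv_lt_one_of_one_lt₀ (one_lt_pow₀ one_lt_two (by positivity))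

lemma rseq_strictAnti : StrictAnti rseq :=
  strictAnti_nat_of_succ_lt fun i => by
    rw [rseq_succ]
    nlinarith [rseq_pos i, rseq_lt_one i]

lemma rseq_lt_half {i : ℕ} (hi : 1 ≤ i) : rseq i < 1 / 2 :=
  (rseq_strictAnti.antitone hi).trans_lt ((rseq_strictAnti zero_lt_one).trans_eq (by simp [rseq]))

lemma log_rseq (i : ℕ) : log (rseq i) = -(2 ^ i * log 2) := by
  rw [rseq, log_inv, log_pow]
  push_cast
  ring

lemma tendsto_rseq_atTop : Tendsto rseq atTop (𝓝 0) :=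
  squeeze_zero (fun i => (rseq_pos i).le) rseq_le_inv_two_pow
    (tendsto_pow_atTop_nhds_zero_of_lt_one (by norm_num) (by norm_num))

lemma exists_rseq_succ_lt_le {x : ℝ} {k : ℕ} (hx : 0 < x) (hxk : x ≤ rseq k) :
    ∃ i, k ≤ i ∧ rseq (i + 1) < x ∧ x ≤ rseq i := by
  classical
  have hex : ∃ n, rseq n < x := (tendsto_order.1 tendsto_rseq_atTop).2 x hx |>.exists
  have hk : k < Nat.find hex := (Nat.lt_find_iff hex k).2 fun m hm => not_lt.2 <|
    hxk.trans (rseq_strictAnti.antitone hm)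
  refine ⟨Nat.find hex - 1, by omega, ?_, not_lt.1 (Nat.find_min hex (by omega))⟩
  rw [Nat.sub_add_cancel (by omega)]
  exact Nat.find_spec hex

lemma aseq_mul_rseq_sq (i : ℕ) : aseq i * rseq i ^ 2 = ((i : ℝ) * (i + 1))⁻¹ := by
  rw [← rseq_succ, aseq, rseq, div_mul_eq_mul_div, mul_inv_cancel₀ (by positivity), one_div]

lemma aseq_pos {i : ℕ} (hi : 1 ≤ i) : 0 < aseq i := by
  have : (0 : ℝ) < i := by exact_mod_cast hi
  unfold aseq; positivity

theorem hasSum_sub_succ_of_antitone {g : ℕ → ℝ} {l : ℝ} (hg : Antitone g)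
    (hl : Tendsto g atTop (𝓝 l)) : HasSum (fun n => g n - g (n + 1)) (g 0 - l) := by
  rw [hasSum_iff_tendsto_nat_of_nonneg fun n => sub_nonneg.2 (hg n.le_succ)]
  simp_rw [Finset.sum_range_sub']
  exact tendsto_const_nhds.sub hl

lemma hasSum_ite_inv_mul_succ {i : ℕ} (hi : 1 ≤ i) :
    HasSum (fun j : ℕ => if i ≤ j then ((j : ℝ) * (j + 1))⁻¹ else 0) (i : ℝ)⁻¹ := by
  have hg : Antitone fun j : ℕ => ((max i j : ℕ) : ℝ)⁻¹ := fun a b hab =>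
    inv_anti₀ (by simp; omega) (by exact_mod_cast max_le_max_left i hab)
  have hlim : Tendsto (fun j : ℕ => ((max i j : ℕ) : ℝ)⁻¹) atTop (𝓝 0) :=
    tendsto_inv_atTop_zero.comp <| tendsto_natCast_atTop_atTop.comp <|
      tendsto_atTop_mono (le_max_right i) tendsto_id
  -- `1 / (j (j + 1)) = 1 / j - 1 / (j + 1)`, telescoped through `1 / max i j`
  convert hasSum_sub_succ_of_antitone hg hlim using 1
  · ext j
    split_ifs with hij
    · have hj : (0 : ℝ) < j := by exact_mod_cast hi.trans hij
      rw [max_eq_right hij, max_eq_right (hij.trans j.le_succ)]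
      push_cast
      field_simp
      ring
    · rw [max_eq_left (by omega), max_eq_left (by omega), sub_self]
  · simp

noncomputable def kneserTerm (j : ℕ) : ℝ := aseq j * ((rseq j) ^ 2 - (rseq (j + 1)) ^ 2)

noncomputable def kneserTail (i : ℕ) : ℝ := ∑' j : ℕ, if i ≤ j then kneserTerm j else 0

lemma kneserTerm_eq (j : ℕ) : kneserTerm j = (1 - rseq j ^ 2) * ((j : ℝ) * (j + 1))⁻¹ := by
  rw [kneserTerm, rseq_succ, ← aseq_mul_rseq_sq]
  ring

lemma kneserTerm_nonneg (j : ℕ) : 0 ≤ kneserTerm j := by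
  rw [kneserTerm_eq]
  have := rseq_lt_one j
  have := rseq_pos j
  exact mul_nonneg (by nlinarith) (by positivity)

lemma kneserTerm_le (j : ℕ) : kneserTerm j ≤ ((j : ℝ) * (j + 1))⁻¹ := by
  rw [kneserTerm_eq]
  exact mul_le_of_le_one_left (by positivity) (by nlinarith)

lemma summable_kneserTail {i : ℕ} (hi : 1 ≤ i) :
    Summable fun j => if i ≤ j then kneserTerm j else 0 :=
  (hasSum_ite_inv_mul_succ hi).summable.of_nonneg_of_le
    (fun j => by split_ifs <;> simp [kneserTerm_nonneg])
    (fun j => by split_ifs; exacts [kneserTerm_le j, le_rfl])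

lemma kneserTail_le {i : ℕ} (hi : 1 ≤ i) : kneserTail i ≤ (i : ℝ)⁻¹ :=
  hasSum_le (fun j => by split_ifs; exacts [kneserTerm_le j, le_rfl])
    (summable_kneserTail hi).hasSum (hasSum_ite_inv_mul_succ hi)

lemma le_kneserTail {i : ℕ} (hi : 1 ≤ i) :
    (1 - rseq i ^ 2) * (i : ℝ)⁻¹ ≤ kneserTail i := by
  refine hasSum_le (fun j => ?_) ((hasSum_ite_inv_mul_succ hi).mul_left _)
    (summable_kneserTail hi).hasSum
  split_ifs with hij
  · rw [kneserTerm_eq]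
    have := rseq_strictAnti.antitone hij
    have := rseq_pos j
    gcongr
  · simp

lemma kneserTail_eq_add_succ {i : ℕ} (hi : 1 ≤ i) :
    kneserTail i = kneserTerm i + kneserTail (i + 1) := by
  rw [kneserTail, (summable_kneserTail hi).tsum_eq_add_tsum_ite i, if_pos le_rfl, kneserTail]
  congr 2 with j
  split_ifs <;> first | rfl | omega

lemma kneserTail_anti {i j : ℕ} (hi : 1 ≤ i) (hij : i ≤ j) : kneserTail j ≤ kneserTail i :=
  (summable_kneserTail (hi.trans hij)).tsum_le_tsum (fun n => by
    split_ifs <;> first | exact le_rfl | exact kneserTerm_nonneg n | omega)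
    (summable_kneserTail hi)

lemma neg_log_bounds {i : ℕ} {x : ℝ} (h1 : rseq (i + 1) < x) (h2 : x ≤ rseq i) :
    2 ^ i * log 2 ≤ -log x ∧ -log x < 2 ^ (i + 1) * log 2 := by
  have hx := (rseq_pos _).trans h1
  have hle := log_le_log hx h2
  have hlt := log_lt_log (rseq_pos _) h1
  rw [log_rseq] at hle hlt
  constructor <;> linarith

lemma log_neg_log_bounds {i : ℕ} {x : ℝ} (h1 : rseq (i + 1) < x) (h2 : x ≤ rseq i) :
    ((i : ℝ) - 1) * log 2 < log (-log x) ∧ log (-log x) < ((i : ℝ) + 1) * log 2 := by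
  obtain ⟨hlo, hhi⟩ := neg_log_bounds h1 h2
  have hl₀ := log_two_gt_d9
  have hl₁ := log_two_lt_d9
  have hpos : (0 : ℝ) < 2 ^ i := by positivity
  constructor
  · calc ((i : ℝ) - 1) * log 2 = log (2 ^ i / 2) := by
          rw [log_div (by positivity) two_ne_zero, log_pow]; ring
      _ < log (-log x) := log_lt_log (by positivity) (by nlinarith)
  · calc log (-log x) < log (2 ^ (i + 1)) :=
          log_lt_log (by nlinarith) (by nlinarith [pow_succ (2 : ℝ) i])
      _ = ((i : ℝ) + 1) * log 2 := by rw [log_pow]; push_cast; ring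

lemma gaugeH_eq {x : ℝ} (hx₀ : 0 < x) (hx₁ : x < 1) : gaugeH x = log 2 / log (-log x) := by
  rw [gaugeH, abs_of_neg (log_neg hx₀ hx₁)]

lemma tendsto_gaugeH_nhdsGT_zero : Tendsto gaugeH (𝓝[>] 0) (𝓝 0) :=
  tendsto_const_nhds.div_atTop <|
    tendsto_log_atTop.comp (tendsto_abs_atBot_atTop.comp tendsto_log_nhdsGT_zero)

lemma hasDerivAt_gaugeH {x : ℝ} (hx₀ : 0 < x) (hx : 1 < -log x) :
    HasDerivAt gaugeH (log 2 / (x * -log x * log (-log x) ^ 2)) x := by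
  have hx₁ : x < 1 := by
    by_contra h
    linarith [log_nonneg (not_lt.1 h)]
  have hG : log (-log x) ≠ 0 := (log_pos hx).ne'
  have hderiv : HasDerivAt (fun y => log (-log y)) (-x⁻¹ / -log x) x :=
    (hasDerivAt_log hx₀.ne').neg.log (by simp only [Pi.neg_apply]; linarith)
  have := (hasDerivAt_const x (log 2)).div hderiv hG
  refine (this.congr_of_eventuallyEq ?_).congr_deriv ?_
  · filter_upwards [Ioo_mem_nhds hx₀ hx₁] with y hy
    exact gaugeH_eq hy.1 hy.2
  · field_simp
    ring

lemma deriv_gaugeH_pos {x : ℝ} (hx₀ : 0 < x) (hx : 1 < -log x) : 0 < deriv gaugeH x := by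
  rw [(hasDerivAt_gaugeH hx₀ hx).deriv]
  have := log_pos hx
  have := log_pos one_lt_two
  have : 0 < -log x := by linarith
  positivity

lemma abs_mul_sub_one_le {y t n e : ℝ} (hn : 1 ≤ n) (he₀ : 0 ≤ e) (he₁ : e ≤ 1)
    (hy₁ : (1 - e) * (n + 1)⁻¹ ≤ y) (hy₂ : y ≤ n⁻¹) (ht₁ : n - 1 ≤ t)
    (ht₂ : t ≤ n + 1) :
    |y * t - 1| ≤ 2 * (n + 1)⁻¹ + e := by
  have hu : 0 < (n + 1)⁻¹ := inv_pos.2 (by linarith)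
  have hy₀ : 0 ≤ y := (mul_nonneg (by linarith) hu.le).trans hy₁
  have hn₀ : 0 ≤ n⁻¹ := inv_nonneg.2 (by linarith)
  have hlow : (n + 1)⁻¹ * (n - 1) = 1 - 2 * (n + 1)⁻¹ := by field_simp; ring
  have hup : n⁻¹ * (n + 1) ≤ 1 + 2 * (n + 1)⁻¹ := by
    have : 1 + 2 * (n + 1)⁻¹ - n⁻¹ * (n + 1) = (n - 1) / (n * (n + 1)) := by field_simp; ring
    rw [← sub_nonneg, this]
    apply div_nonneg <;> nlinarith
  rw [abs_le]
  constructor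
  · nlinarith [mul_le_mul hy₁ ht₁ (by linarith) hy₀]
  · nlinarith [mul_le_mul hy₂ ht₂ (by linarith) hn₀]

/-- The hypothesis of `kneser_example_extreme`; `kneserTail i` is the value `f (r_i)`. -/
def IsKneserExample (f : ℝ → ℝ) : Prop :=
  ∀ i : ℕ, 1 ≤ i → ∀ x : ℝ, rseq (i + 1) < x → x ≤ rseq i →
    f x = kneserTail i + aseq i * (x ^ 2 - rseq i ^ 2)

namespace IsKneserExample

variable {f : ℝ → ℝ}

lemma mem_Ioc_kneserTail (hf : IsKneserExample f) {i : ℕ} {x : ℝ} (hi : 1 ≤ i)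
    (h1 : rseq (i + 1) < x) (h2 : x ≤ rseq i) :
    f x ∈ Ioc (kneserTail (i + 1)) (kneserTail i) := by
  have ha := aseq_pos hi
  have hx := (rseq_pos (i + 1)).trans h1
  have hsq1 : rseq (i + 1) ^ 2 < x ^ 2 := by gcongr; exact (rseq_pos _).le
  have hsq2 : x ^ 2 ≤ rseq i ^ 2 := by gcongr
  rw [hf i hi x h1 h2]
  constructor
  · rw [kneserTail_eq_add_succ hi, kneserTerm]
    nlinarith
  · nlinarith

lemma monotoneOn (hf : IsKneserExample f) : MonotoneOn f (Ioc 0 (rseq 1)) := by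
  intro x hx y hy hxy
  obtain ⟨i, hi, hx1, hx2⟩ := exists_rseq_succ_lt_le hx.1 hx.2
  obtain ⟨j, hj, hy1, hy2⟩ := exists_rseq_succ_lt_le hy.1 hy.2
  rcases lt_or_ge j i with hji | hij
  · calc f x ≤ kneserTail i := (hf.mem_Ioc_kneserTail hi hx1 hx2).2
      _ ≤ kneserTail (j + 1) := kneserTail_anti (by omega) hji
      _ ≤ f y := (hf.mem_Ioc_kneserTail hj hy1 hy2).1.le
  · obtain rfl : i = j := by
      by_contra hne
      have := rseq_strictAnti.antitone (show i + 1 ≤ j by omega)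
      linarith
    rw [hf i hi x hx1 hx2, hf i hi y hy1 hy2]
    have := aseq_pos hi
    gcongr
    exact hx.1.le

lemma hasDerivAt (hf : IsKneserExample f) {i : ℕ} {x : ℝ} (hi : 1 ≤ i)
    (h1 : rseq (i + 1) < x) (h2 : x < rseq i) :
    HasDerivAt f (2 * aseq i * x) x := by
  have hquad := (((hasDerivAt_pow 2 x).sub_const (rseq i ^ 2)).const_mul (aseq i)).const_add
    (kneserTail i)
  refine (hquad.congr_of_eventuallyEq ?_).congr_deriv (by push_cast; ring)
  filter_upwards [Ioo_mem_nhds h1 h2] with y hy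
  exact hf i hi y hy.1 hy.2.le

lemma abs_div_gaugeH_sub_one_le (hf : IsKneserExample f) {x : ℝ} (hx₀ : 0 < x)
    (hx : x ≤ rseq 1) : |f x / gaugeH x - 1| ≤ 2 * gaugeH x + x ^ 2 := by
  obtain ⟨i, hi, h1, h2⟩ := exists_rseq_succ_lt_le hx₀ hx
  obtain ⟨hG₁, hG₂⟩ := log_neg_log_bounds h1 h2
  obtain ⟨hf₁, hf₂⟩ := hf.mem_Ioc_kneserTail hi h1 h2
  have hn : (1 : ℝ) ≤ i := by exact_mod_cast hi
  have hl := log_pos one_lt_two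
  rw [gaugeH_eq hx₀ (h2.trans_lt (rseq_lt_one i))]
  set G := log (-log x)
  have hG : 0 < G := by nlinarith
  have hlow : (1 - x ^ 2) * ((i : ℝ) + 1)⁻¹ ≤ f x := by
    have := le_kneserTail (i := i + 1) (by omega)
    push_cast at this
    have : rseq (i + 1) ^ 2 ≤ x ^ 2 := by gcongr; exact (rseq_pos _).le
    nlinarith [hf₁, inv_pos.2 (show (0 : ℝ) < i + 1 by linarith)]
  have hgauge : ((i : ℝ) + 1)⁻¹ ≤ log 2 / G := by
    rw [inv_eq_one_div, div_le_div_iff₀ (by linarith) hG]; linarith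
  have hest := abs_mul_sub_one_le (t := G / log 2) hn (sq_nonneg x)
    (by nlinarith [rseq_lt_one 1]) hlow
    (hf₂.trans (kneserTail_le hi)) (by rw [le_div_iff₀ hl]; linarith)
    (by rw [div_le_iff₀ hl]; linarith)
  rw [div_div_eq_mul_div, mul_div_assoc]
  linarith

lemma tendsto_div_gaugeH (hf : IsKneserExample f) :
    Tendsto (fun x => f x / gaugeH x) (𝓝[>] 0) (𝓝 1) := by
  have hbound : ∀ᶠ x in 𝓝[>] 0, ‖f x / gaugeH x - 1‖ ≤ 2 * gaugeH x + x ^ 2 := by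
    filter_upwards [Ioo_mem_nhdsGT (rseq_pos 1)] with x hx
    exact hf.abs_div_gaugeH_sub_one_le hx.1 hx.2.le
  have hsq : Tendsto (fun x : ℝ => x ^ 2) (𝓝[>] 0) (𝓝 0) := by
    simpa using ((continuous_pow 2).tendsto (0 : ℝ)).mono_left nhdsWithin_le_nhds
  have hlim := (tendsto_gaugeH_nhdsGT_zero.const_mul 2).add hsq
  rw [mul_zero, add_zero] at hlim
  exact tendsto_iff_norm_sub_tendsto_zero.2
    (squeeze_zero' (Eventually.of_forall fun _ => norm_nonneg _) hbound hlim)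

lemma deriv_div_deriv_gaugeH_eq (hf : IsKneserExample f) {i : ℕ} {x : ℝ} (hi : 1 ≤ i)
    (h1 : rseq (i + 1) < x) (h2 : x < rseq i) :
    deriv f x / deriv gaugeH x = 2 * aseq i * x ^ 2 * -log x * log (-log x) ^ 2 / log 2 := by
  have hx₀ := (rseq_pos _).trans h1
  have hlog : 1 < -log x := by
    have h2i : (2 : ℝ) ≤ 2 ^ i := by simpa using pow_le_pow_right₀ one_le_two hi
    nlinarith [(neg_log_bounds h1 h2.le).1, log_two_gt_d9]
  rw [(hf.hasDerivAt hi h1 h2).deriv, (hasDerivAt_gaugeH hx₀ hlog).deriv]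
  have := log_pos hlog
  have := log_pos one_lt_two
  field_simp

lemma deriv_div_deriv_gaugeH_nonneg (hf : IsKneserExample f) {x : ℝ} (hx₀ : 0 < x)
    (hx : x < rseq 1) : 0 ≤ deriv f x / deriv gaugeH x := by
  have hlog : 1 < -log x := by
    have := log_lt_log hx₀ hx
    rw [log_rseq] at this
    linarith [log_two_gt_d9]
  refine div_nonneg ?_ (deriv_gaugeH_pos hx₀ hlog).le
  exact ((hf.monotoneOn.mono Ioo_subset_Ioc_self).derivWithin_nonneg).trans_eq
    (derivWithin_of_mem_nhds (Ioo_mem_nhds hx₀ hx))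

lemma le_deriv_div_deriv_gaugeH_rseq_div_two (hf : IsKneserExample f) {i : ℕ} (hi : 3 ≤ i) :
    2 ^ i / 32 ≤ deriv f (rseq i / 2) / deriv gaugeH (rseq i / 2) := by
  have hr := rseq_pos i
  have hhalf := rseq_lt_half (show 1 ≤ i by omega)
  have h1 : rseq (i + 1) < rseq i / 2 := by rw [rseq_succ]; nlinarith
  have h2 : rseq i / 2 < rseq i := by linarith
  obtain ⟨hL, -⟩ := neg_log_bounds h1 h2.le
  obtain ⟨hG, -⟩ := log_neg_log_bounds h1 h2.le
  have hn : (3 : ℝ) ≤ i := by exact_mod_cast hi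
  have hl := log_two_gt_d9
  have ha : 2 * aseq i * (rseq i / 2) ^ 2 = ((i : ℝ) * (i + 1))⁻¹ / 2 := by
    rw [← aseq_mul_rseq_sq]; ring
  rw [hf.deriv_div_deriv_gaugeH_eq (by omega) h1 h2, ha]
  set n := (i : ℝ)
  set l := log 2
  have hG' : ((n - 1) * l) ^ 2 ≤ log (-log (rseq i / 2)) ^ 2 := by
    gcongr
    nlinarith
  calc 2 ^ i / 32 ≤ (n * (n + 1))⁻¹ / 2 * (2 ^ i * l) * ((n - 1) * l) ^ 2 / l := by
        rw [div_le_div_iff₀ (by norm_num) (by positivity)]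
        field_simp
        have : (0 : ℝ) < 2 ^ i := by positivity
        have hl2 : 1 / 4 ≤ l ^ 2 := by nlinarith
        have hpoly : n * (n + 1) ≤ 16 * ((n - 1) ^ 2 * l ^ 2) := by
          nlinarith [mul_le_mul_of_nonneg_left hl2 (sq_nonneg (n - 1))]
        nlinarith [mul_le_mul_of_nonneg_left hpoly this.le]
    _ ≤ _ := by
        have : (0 : ℝ) < 2 ^ i := by positivity
        gcongr
        exact mul_nonneg (by positivity) (by nlinarith)

lemma deriv_div_deriv_gaugeH_two_mul_rseq_sq_le (hf : IsKneserExample f) {i : ℕ} (hi : 1 ≤ i) :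
    deriv f (2 * rseq i ^ 2) / deriv gaugeH (2 * rseq i ^ 2) ≤ 32 * 2⁻¹ ^ i := by
  have hr := rseq_pos i
  have hhalf := rseq_lt_half hi
  have h1 : rseq (i + 1) < 2 * rseq i ^ 2 := by rw [rseq_succ]; nlinarith
  have h2 : 2 * rseq i ^ 2 < rseq i := by nlinarith
  obtain ⟨-, hL⟩ := neg_log_bounds h1 h2.le
  obtain ⟨hG₁, hG₂⟩ := log_neg_log_bounds h1 h2.le
  have hn : (1 : ℝ) ≤ i := by exact_mod_cast hi
  have hl := log_two_gt_d9
  have hl' := log_two_lt_d9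
  have ha : 2 * aseq i * (2 * rseq i ^ 2) ^ 2 = 8 * rseq i ^ 2 * ((i : ℝ) * (i + 1))⁻¹ := by
    rw [← aseq_mul_rseq_sq]; ring
  rw [hf.deriv_div_deriv_gaugeH_eq hi h1 h2, ha]
  set n := (i : ℝ)
  set l := log 2
  have hG : log (-log (2 * rseq i ^ 2)) ^ 2 ≤ ((n + 1) * l) ^ 2 := by
    gcongr
    nlinarith
  have hri : rseq i ^ 2 * 2 ^ i ≤ 2⁻¹ ^ i := by
    calc rseq i ^ 2 * 2 ^ i ≤ (2⁻¹ ^ i) ^ 2 * 2 ^ i := by gcongr; exact rseq_le_inv_two_pow i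
      _ = 2⁻¹ ^ i := by
          rw [sq, mul_assoc, ← mul_pow, inv_mul_cancel₀ two_ne_zero, one_pow, mul_one]
  calc _ ≤ 8 * rseq i ^ 2 * (n * (n + 1))⁻¹ * (2 ^ (i + 1) * l) * ((n + 1) * l) ^ 2 / l := by
        gcongr
    _ = 16 * (rseq i ^ 2 * 2 ^ i) * ((n + 1) / n) * l ^ 2 := by
        field_simp
        ring
    _ ≤ 16 * 2⁻¹ ^ i * 2 * 1 := by
        gcongr
        · rw [div_le_iff₀ (by positivity)]; linarith
        · nlinarith
    _ = 32 * 2⁻¹ ^ i := by ring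

lemma tendsto_deriv_div_deriv_gaugeH_rseq_div_two (hf : IsKneserExample f) :
    Tendsto (fun i => deriv f (rseq i / 2) / deriv gaugeH (rseq i / 2)) atTop atTop :=
  tendsto_atTop_mono' atTop
    ((eventually_ge_atTop 3).mono fun _ hi => hf.le_deriv_div_deriv_gaugeH_rseq_div_two hi)
    ((tendsto_pow_atTop_atTop_of_one_lt one_lt_two).atTop_div_const (by norm_num))

lemma tendsto_deriv_div_deriv_gaugeH_two_mul_rseq_sq (hf : IsKneserExample f) :
    Tendsto (fun i => deriv f (2 * rseq i ^ 2) / deriv gaugeH (2 * rseq i ^ 2)) atTop (𝓝 0) := by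
  refine squeeze_zero' ?_ ((eventually_ge_atTop 1).mono fun _ hi =>
    hf.deriv_div_deriv_gaugeH_two_mul_rseq_sq_le hi) ?_
  · filter_upwards [eventually_ge_atTop 1] with i hi
    have := rseq_pos i
    have := rseq_lt_half hi
    have := rseq_strictAnti.antitone hi
    exact hf.deriv_div_deriv_gaugeH_nonneg (by positivity) (by nlinarith)
  · simpa using (tendsto_pow_atTop_nhds_zero_of_lt_one (by norm_num : (0 : ℝ) ≤ 2⁻¹)
      (by norm_num)).const_mul 32

end IsKneserExample

lemma tendsto_rseq_div_two_nhdsGT : Tendsto (fun i => rseq i / 2) atTop (𝓝[>] 0) :=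
  tendsto_nhdsWithin_iff.2 ⟨by simpa using tendsto_rseq_atTop.div_const 2,
    Eventually.of_forall fun i => half_pos (rseq_pos i)⟩

lemma tendsto_two_mul_rseq_sq_nhdsGT : Tendsto (fun i => 2 * rseq i ^ 2) atTop (𝓝[>] 0) :=
  tendsto_nhdsWithin_iff.2 ⟨by simpa using (tendsto_rseq_atTop.pow 2).const_mul 2,
    Eventually.of_forall fun i => mul_pos two_pos (pow_pos (rseq_pos i) 2)⟩

theorem liminf_coe_le_of_tendsto_comp {α : Type*} {l : Filter α} {g : α → ℝ} {u : ℕ → α}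
    {b : ℝ} (hu : Tendsto u atTop l) (hg : Tendsto (g ∘ u) atTop (𝓝 b)) :
    liminf (fun x => (g x : EReal)) l ≤ b :=
  hu.liminf_le_liminf_comp.trans_eq (EReal.tendsto_coe.2 hg).liminf_eq

theorem limsup_coe_eq_top_of_tendsto_comp {α : Type*} {l : Filter α} {g : α → ℝ}
    {u : ℕ → α} (hu : Tendsto u atTop l) (hg : Tendsto (g ∘ u) atTop atTop) :
    limsup (fun x => (g x : EReal)) l = ⊤ :=
  top_unique <| (EReal.tendsto_coe_atTop.comp hg).limsup_eq.symm.le.trans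
    (hu.limsup_comp_le_limsup (u := fun x => (g x : EReal)))

theorem kneser_example_extreme (f : ℝ → ℝ)
    (hf : ∀ i : ℕ, 1 ≤ i → ∀ x : ℝ, rseq (i + 1) < x → x ≤ rseq i →
      f x = (∑' j : ℕ, if i ≤ j then aseq j * ((rseq j) ^ 2 - (rseq (j + 1)) ^ 2) else 0) +
        aseq i * (x ^ 2 - (rseq i) ^ 2)) :
    Filter.Tendsto (fun x : ℝ => f x / gaugeH x) (𝓝[>] (0 : ℝ)) (𝓝 1) ∧
      Filter.liminf (fun r : ℝ => ((deriv f r / deriv gaugeH r : ℝ) : EReal))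
        (𝓝[>] (0 : ℝ)) = 0 ∧
      Filter.limsup (fun r : ℝ => ((deriv f r / deriv gaugeH r : ℝ) : EReal))
        (𝓝[>] (0 : ℝ)) = ⊤ := by
  have hK : IsKneserExample f := hf
  refine ⟨hK.tendsto_div_gaugeH, le_antisymm ?_ ?_, ?_⟩
  · exact liminf_coe_le_of_tendsto_comp tendsto_two_mul_rseq_sq_nhdsGT
      hK.tendsto_deriv_div_deriv_gaugeH_two_mul_rseq_sq
  · refine le_liminf_of_le (by isBoundedDefault) ?_
    filter_upwards [Ioo_mem_nhdsGT (rseq_pos 1)] with x hx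
    exact EReal.coe_nonneg.2 (hK.deriv_div_deriv_gaugeH_nonneg hx.1 hx.2)
  · exact limsup_coe_eq_top_of_tendsto_comp tendsto_rseq_div_two_nhdsGT
      hK.tendsto_deriv_div_deriv_gaugeH_rseq_div_two
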